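/- arXiv:2002.06934 — 2 statements merged into one kernel-verified Lean document; each statement's English description precedes it below -/
import Mathlib

section
/- If T is a strongly Cesàro bounded operator on a complex Banach space X, then its adjoint T* is strongly Cesàro bounded on X*. -/
open MeasureTheory Filter Asymptotics Finset

/-- `T` is strongly Cesàro bounded with constant `C`. -/
def StrongCesaroBounded {X : Type} [NormedAddCommGroup X] [NormedSpace ℂ X]
    (T : X →L[ℂ] X) (C : ℝ) : Prop :=
  0 < C ∧ ∀ n : ℕ, 1 ≤ n → ∀ x : X, ∀ φ : StrongDual ℂ X,
    ∑ k ∈ Finset.range n, ‖φ ((T ^ k) x)‖ ≤ C * n * ‖φ‖ * ‖x‖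

/-- The Banach-space adjoint of `T`, acting on the dual space by `φ ↦ φ ∘ T`. -/
noncomputable def banachAdjoint {X : Type} [NormedAddCommGroup X] [NormedSpace ℂ X]
    (T : X →L[ℂ] X) : StrongDual ℂ X →L[ℂ] StrongDual ℂ X :=
  (ContinuousLinearMap.compSL X X ℂ (RingHom.id ℂ) (RingHom.id ℂ)).flip T

/-!
Given `φ` and `Φ`, pick unimodular-or-zero scalars `c k` with `c k * Φ (T*ᵏ φ) = ‖Φ (T*ᵏ φ)‖`.
Then the Cesàro sum for `T*` equals `‖Φ ψ‖` with `ψ = ∑ c k • T*ᵏ φ`, and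
`|ψ x| = |∑ c k φ (Tᵏ x)| ≤ ∑ |φ (Tᵏ x)| ≤ C n ‖φ‖ ‖x‖`, so the same constant `C` works for `T*`.
-/

section NormingScalars

variable {𝕜 : Type*} [RCLike 𝕜]

theorem RCLike.exists_norm_le_one_mul_eq_norm (z : 𝕜) : ∃ c : 𝕜, ‖c‖ ≤ 1 ∧ c * z = ‖z‖ := by
  rcases eq_or_ne z 0 with rfl | hz
  · exact ⟨0, by simp, by simp⟩
  have hz' : (‖z‖ : 𝕜) ≠ 0 := by simpa using hz
  refine ⟨starRingEnd 𝕜 z / ‖z‖, ?_, ?_⟩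
  · rw [norm_div, RCLike.norm_conj, RCLike.norm_ofReal, abs_norm, div_self (norm_ne_zero_iff.mpr hz)]
  · rw [div_mul_eq_mul_div, RCLike.conj_mul, sq, mul_div_assoc, div_self hz', mul_one]

variable {E : Type*} [NormedAddCommGroup E] [NormedSpace 𝕜 E]

theorem StrongDual.exists_sum_norm_apply_eq_norm_apply_sum_smul {ι : Type*} (s : Finset ι)
    (Φ : StrongDual 𝕜 E) (v : ι → E) :
    ∃ c : ι → 𝕜, (∀ k, ‖c k‖ ≤ 1) ∧ ∑ k ∈ s, ‖Φ (v k)‖ = ‖Φ (∑ k ∈ s, c k • v k)‖ := by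
  choose c hc_norm hc_mul using fun k => RCLike.exists_norm_le_one_mul_eq_norm (Φ (v k))
  refine ⟨c, hc_norm, ?_⟩
  have hΦ : Φ (∑ k ∈ s, c k • v k) = ((∑ k ∈ s, ‖Φ (v k)‖ : ℝ) : 𝕜) := by
    simp only [map_sum, map_smul, smul_eq_mul, hc_mul]
  rw [hΦ, RCLike.norm_ofReal, abs_of_nonneg (sum_nonneg fun k _ => norm_nonneg _)]

theorem StrongDual.norm_sum_smul_le {ι : Type*} (s : Finset ι) (ψ : ι → StrongDual 𝕜 E)
    {c : ι → 𝕜} (hc : ∀ k, ‖c k‖ ≤ 1) {M : ℝ} (hM : 0 ≤ M)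
    (hψ : ∀ x, ∑ k ∈ s, ‖ψ k x‖ ≤ M * ‖x‖) :
    ‖∑ k ∈ s, c k • ψ k‖ ≤ M := by
  refine ContinuousLinearMap.opNorm_le_bound _ hM fun x => ?_
  calc ‖(∑ k ∈ s, c k • ψ k) x‖ = ‖∑ k ∈ s, c k * ψ k x‖ := by
        simp only [FunLike.coe_sum, Finset.sum_apply, FunLike.coe_smul, Pi.smul_apply, smul_eq_mul]
    _ ≤ ∑ k ∈ s, ‖c k * ψ k x‖ := norm_sum_le _ _
    _ ≤ ∑ k ∈ s, ‖ψ k x‖ := sum_le_sum fun k _ => by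
        rw [norm_mul]; exact mul_le_of_le_one_left (norm_nonneg _) (hc k)
    _ ≤ M * ‖x‖ := hψ x

end NormingScalars

set_option synthInstance.maxHeartbeats 200000 in
theorem banachAdjoint_pow_apply {X : Type} [NormedAddCommGroup X] [NormedSpace ℂ X]
    (T : X →L[ℂ] X) (k : ℕ) (φ : StrongDual ℂ X) (x : X) :
    (banachAdjoint T ^ k) φ x = φ ((T ^ k) x) := by
  induction k generalizing φ with
  | zero => rfl
  | succ k ih =>
    rw [pow_succ, pow_succ']
    exact ih (banachAdjoint T φ)

theorem strong_cesaro_bounded_adjoint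
    {X : Type} [NormedAddCommGroup X] [NormedSpace ℂ X]
    (T : X →L[ℂ] X) (C : ℝ) (h : StrongCesaroBounded T C) :
    ∃ C' : ℝ, StrongCesaroBounded (banachAdjoint T) C' := by
  obtain ⟨hC, hT⟩ := h
  refine ⟨C, hC, fun n hn φ Φ => ?_⟩
  obtain ⟨c, hc, hsum⟩ := StrongDual.exists_sum_norm_apply_eq_norm_apply_sum_smul
    (range n) Φ fun k => (banachAdjoint T ^ k) φ
  have hψ : ‖∑ k ∈ range n, c k • (banachAdjoint T ^ k) φ‖ ≤ C * n * ‖φ‖ :=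
    StrongDual.norm_sum_smul_le _ _ hc (by positivity) fun x => by
      simpa only [banachAdjoint_pow_apply] using hT n hn x φ
  calc ∑ k ∈ range n, ‖Φ ((banachAdjoint T ^ k) φ)‖
      = ‖Φ (∑ k ∈ range n, c k • (banachAdjoint T ^ k) φ)‖ := hsum
    _ ≤ ‖Φ‖ * (C * n * ‖φ‖) := Φ.le_of_opNorm_le_of_le le_rfl hψ
    _ = C * n * ‖Φ‖ * ‖φ‖ := by ring
end

section
/- Kahane's contraction principle (subset form): if ξ_1, …, ξ_n are independent symmetric X-valued random variables in L^p and I ⊆ J ⊆ {1,…,n}, then E(‖∑_{k∈I} ξ_k‖^p) ≤ E(‖∑_{k∈J} ξ_k‖^p). -/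
/-!
Flipping the signs of the `ξ k` with `k ∈ J \ I` does not change the joint law, by independence
and symmetry. Hence with `S = ∑ k ∈ I, ξ k` and `T = ∑ k ∈ J \ I, ξ k` the variables `S + T` and
`S - T` are identically distributed, and averaging the pointwise convexity bound
`2 ‖S‖ ^ p ≤ ‖S + T‖ ^ p + ‖S - T‖ ^ p` gives the claim.

Addition on `X × X` need not be measurable when `X` is not separable, so the argument is first run
in a closed separable subspace `Y` which almost surely contains all the `ξ k`.
-/

open MeasureTheory ProbabilityTheory Finset

theorem two_mul_norm_rpow_le_norm_add_rpow_add_norm_sub_rpow {E : Type*}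
    [SeminormedAddCommGroup E] [NormedSpace ℝ E] {p : ℝ} (hp : 1 ≤ p) (x y : E) :
    2 * ‖x‖ ^ p ≤ ‖x + y‖ ^ p + ‖x - y‖ ^ p := by
  have hmid : ‖x‖ ≤ (1 / 2 : ℝ) * ‖x + y‖ + (1 / 2 : ℝ) * ‖x - y‖ := by
    have h := norm_add_le (x + y) (x - y)
    rw [add_add_sub_cancel, ← two_smul ℝ x, norm_smul, Real.norm_two] at h
    linarith
  have hconv := (convexOn_rpow hp).2 (Set.mem_Ici.2 (norm_nonneg (x + y)))
    (Set.mem_Ici.2 (norm_nonneg (x - y))) (by norm_num : (0 : ℝ) ≤ 1 / 2)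
    (by norm_num : (0 : ℝ) ≤ 1 / 2) (by norm_num)
  simp only [smul_eq_mul] at hconv
  have := (Real.rpow_le_rpow (norm_nonneg x) hmid (by linarith)).trans hconv
  linarith

theorem ProbabilityTheory.iIndepFun.identDistrib_neg_on {ι Ω E : Type*} [Countable ι]
    [DecidableEq ι] [MeasurableSpace Ω] {μ : Measure Ω} [MeasurableSpace E] [Neg E]
    [MeasurableNeg E] {ξ : ι → Ω → E} (hindep : iIndepFun ξ μ)
    (hsymm : ∀ k, IdentDistrib (ξ k) (-ξ k) μ μ) (s : Finset ι) :
    IdentDistrib (fun ω k => ξ k ω) (fun ω k => if k ∈ s then -ξ k ω else ξ k ω) μ μ := by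
  have hflip : ∀ k, Measurable (fun x : E => if k ∈ s then -x else x) := fun k => by
    split_ifs
    exacts [measurable_neg, measurable_id]
  refine IdentDistrib.pi (fun k => ?_) hindep (hindep.comp _ hflip)
  by_cases hk : k ∈ s
  · simp only [hk, if_true]
    exact hsymm k
  · simpa [hk] using IdentDistrib.refl (hsymm k).aemeasurable_fst

section Moments

variable {Ω E : Type*} [MeasurableSpace Ω] {μ : Measure Ω}
  [NormedAddCommGroup E] [NormedSpace ℝ E] [MeasurableSpace E] [BorelSpace E]

theorem integral_norm_rpow_le_of_identDistrib_add_sub [IsFiniteMeasure μ] {p : ℝ} (hp : 1 ≤ p)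
    {S T : Ω → E} (hS : MemLp S (ENNReal.ofReal p) μ) (hT : MemLp T (ENNReal.ofReal p) μ)
    (hST : IdentDistrib (S + T) (S - T) μ μ) :
    ∫ ω, ‖S ω‖ ^ p ∂μ ≤ ∫ ω, ‖S ω + T ω‖ ^ p ∂μ := by
  have hint : ∀ {f : Ω → E}, MemLp f (ENNReal.ofReal p) μ → Integrable (fun ω => ‖f ω‖ ^ p) μ :=
    fun hf => by simpa [ENNReal.toReal_ofReal (zero_le_one.trans hp)] using hf.integrable_norm_rpow'
  have hadd : Integrable (fun ω => ‖S ω + T ω‖ ^ p) μ := hint (hS.add hT)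
  have hsub : Integrable (fun ω => ‖S ω - T ω‖ ^ p) μ := hint (hS.sub hT)
  have hsub_eq : ∫ ω, ‖S ω - T ω‖ ^ p ∂μ = ∫ ω, ‖S ω + T ω‖ ^ p ∂μ :=
    ((hST.comp (measurable_norm.pow_const p)).integral_eq).symm
  have hmono :
      2 * ∫ ω, ‖S ω‖ ^ p ∂μ ≤ ∫ ω, ‖S ω + T ω‖ ^ p ∂μ + ∫ ω, ‖S ω - T ω‖ ^ p ∂μ := by
    rw [← integral_const_mul, ← integral_add hadd hsub]
    exact integral_mono ((hint hS).const_mul 2) (hadd.add hsub)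
      fun ω => two_mul_norm_rpow_le_norm_add_rpow_add_norm_sub_rpow hp (S ω) (T ω)
  linarith

theorem integral_norm_sum_rpow_le_of_subset [MeasurableAdd₂ E] {ι : Type*} [Countable ι]
    {p : ℝ} (hp : 1 ≤ p) {ξ : ι → Ω → E} (hindep : iIndepFun ξ μ)
    (hsymm : ∀ k, IdentDistrib (ξ k) (-ξ k) μ μ) {I J : Finset ι}
    (hLp : ∀ k ∈ J, MemLp (ξ k) (ENNReal.ofReal p) μ) (hIJ : I ⊆ J) :
    ∫ ω, ‖∑ k ∈ I, ξ k ω‖ ^ p ∂μ ≤ ∫ ω, ‖∑ k ∈ J, ξ k ω‖ ^ p ∂μ := by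
  classical
  have := hindep.isProbabilityMeasure
  set S : Ω → E := fun ω => ∑ k ∈ I, ξ k ω
  set T : Ω → E := fun ω => ∑ k ∈ J \ I, ξ k ω
  have hsum : ∀ f : ι → E, ∑ k ∈ J, f k = ∑ k ∈ I, f k + ∑ k ∈ J \ I, f k := fun f => by
    rw [add_comm, sum_sdiff hIJ]
  have hflip : IdentDistrib (S + T) (S - T) μ μ := by
    have hsumJ : Measurable fun x : ι → E => ∑ k ∈ J, x k :=
      Finset.measurable_sum J fun k _ => measurable_pi_apply k
    convert (hindep.identDistrib_neg_on hsymm (J \ I)).comp hsumJ using 1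
    · ext ω
      simp [S, T, hsum]
    · ext ω
      simp only [Function.comp, hsum, Pi.sub_apply, S, T, sub_eq_add_neg, ← sum_neg_distrib]
      congr 1 <;> exact sum_congr rfl fun k hk => by simp [hk]
  have hS : MemLp S (ENNReal.ofReal p) μ := memLp_finsetSum I fun k hk => hLp k (hIJ hk)
  have hT : MemLp T (ENNReal.ofReal p) μ :=
    memLp_finsetSum (J \ I) fun k hk => hLp k (mem_sdiff.1 hk).1
  simpa only [hsum] using integral_norm_rpow_le_of_identDistrib_add_sub hp hS hT hflip

end Moments

namespace Submodule

section Retract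

variable {𝕜 E : Type*} [Ring 𝕜] [AddCommGroup E] [Module 𝕜 E] (Y : Submodule 𝕜 E)

open Classical in
noncomputable def retractOrZero (x : E) : Y := if h : x ∈ Y then ⟨x, h⟩ else 0

theorem coe_retractOrZero_of_mem {x : E} (hx : x ∈ Y) : (Y.retractOrZero x : E) = x := by
  simp [retractOrZero, hx]

theorem retractOrZero_neg (x : E) : Y.retractOrZero (-x) = -Y.retractOrZero x := by
  by_cases hx : x ∈ Y
  · ext
    simp [retractOrZero, hx]
  · simp [retractOrZero, hx]

theorem measurable_retractOrZero [MeasurableSpace E] (hY : MeasurableSet (Y : Set E)) :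
    Measurable Y.retractOrZero := by
  classical
  exact Measurable.dite (s := (Y : Set E)) (f := fun y => (⟨y, y.2⟩ : Y))
    measurable_subtype_coe.subtype_mk measurable_const hY

end Retract

theorem norm_retractOrZero_le {𝕜 E : Type*} [Ring 𝕜] [SeminormedAddCommGroup E] [Module 𝕜 E]
    (Y : Submodule 𝕜 E) (x : E) : ‖Y.retractOrZero x‖ ≤ ‖x‖ := by
  by_cases hx : x ∈ Y
  · show ‖(Y.retractOrZero x : E)‖ ≤ ‖x‖
    rw [coe_retractOrZero_of_mem Y hx]
  · simp [retractOrZero, hx]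

end Submodule

theorem exists_isClosed_secondCountable_submodule_ae_mem {ι Ω X : Type*} [Countable ι]
    [NormedAddCommGroup X] [NormedSpace ℝ X] [MeasurableSpace Ω] {μ : Measure Ω}
    {f : ι → Ω → X} (hf : ∀ k, AEStronglyMeasurable (f k) μ) :
    ∃ Y : Submodule ℝ X, IsClosed (Y : Set X) ∧ SecondCountableTopology Y ∧
      ∀ᵐ ω ∂μ, ∀ k, f k ω ∈ Y := by
  choose t ht_sep ht_mem using fun k => (hf k).isSeparable_ae_range
  refine ⟨(Submodule.span ℝ (⋃ k, t k)).topologicalClosure,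
    Submodule.isClosed_topologicalClosure _, ?_, ?_⟩
  · have : TopologicalSpace.SeparableSpace
        ((Submodule.span ℝ (⋃ k, t k)).topologicalClosure : Set X) :=
      (TopologicalSpace.IsSeparable.iUnion ht_sep).span.closure.separableSpace
    exact UniformSpace.secondCountable_of_separable _
  · filter_upwards [ae_all_iff.2 ht_mem] with ω hω k
    exact Submodule.le_topologicalClosure _
      (Submodule.subset_span (Set.mem_iUnion_of_mem k (hω k)))

open ProbabilityTheory in
theorem kahane_contraction_subset_general
    {X : Type} [NormedAddCommGroup X] [NormedSpace ℝ X]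
    [MeasurableSpace X] [BorelSpace X]
    {Ω : Type} [MeasurableSpace Ω] (μ : Measure Ω)
    (p : ℝ) (hp : 1 ≤ p) (n : ℕ) (ξ : Fin n → Ω → X)
    (hindep : iIndepFun ξ μ)
    (hsymm : ∀ k, Measure.map (ξ k) μ = Measure.map (fun ω => -(ξ k ω)) μ)
    (hLp : ∀ k, MemLp (ξ k) (ENNReal.ofReal p) μ)
    (I J : Finset (Fin n)) (hIJ : I ⊆ J) :
    ∫ ω, ‖∑ k ∈ I, ξ k ω‖ ^ p ∂μ ≤ ∫ ω, ‖∑ k ∈ J, ξ k ω‖ ^ p ∂μ := by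
  have hξ : ∀ k, AEMeasurable (ξ k) μ := fun k => (hLp k).aestronglyMeasurable.aemeasurable
  obtain ⟨Y, hY_closed, hY_sc, hY_mem⟩ :=
    exists_isClosed_secondCountable_submodule_ae_mem fun k => (hLp k).aestronglyMeasurable
  have he := Y.measurable_retractOrZero hY_closed.measurableSet
  set ζ : Fin n → Ω → Y := fun k => Y.retractOrZero ∘ ξ k
  have hζ_symm : ∀ k, IdentDistrib (ζ k) (-ζ k) μ μ := fun k => by
    have h : IdentDistrib (ξ k) (-ξ k) μ μ := ⟨hξ k, (hξ k).neg, hsymm k⟩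
    simpa only [ζ, Function.comp_def, Pi.neg_def, Y.retractOrZero_neg] using h.comp he
  have hζ_Lp : ∀ k ∈ J, MemLp (ζ k) (ENNReal.ofReal p) μ := fun k _ =>
    (hLp k).of_le (he.comp_aemeasurable (hξ k)).aestronglyMeasurable
      (ae_of_all _ fun ω => Y.norm_retractOrZero_le _)
  have hcoe : ∀ s : Finset (Fin n),
      ∫ ω, ‖∑ k ∈ s, ξ k ω‖ ^ p ∂μ = ∫ ω, ‖∑ k ∈ s, ζ k ω‖ ^ p ∂μ := fun s => by
    refine integral_congr_ae ?_
    filter_upwards [hY_mem] with ω hω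
    simp [ζ, Y.coe_retractOrZero_of_mem (hω _)]
  rw [hcoe I, hcoe J]
  exact integral_norm_sum_rpow_le_of_subset hp (hindep.comp _ fun _ => he) hζ_symm hζ_Lp hIJ

open ProbabilityTheory in
/-- Kahane's contraction principle, subset form. -/
theorem kahane_contraction_subset
    {X : Type} [NormedAddCommGroup X] [NormedSpace ℝ X]
    [MeasurableSpace X] [BorelSpace X]
    {Ω : Type} [MeasurableSpace Ω] (μ : Measure Ω) [IsProbabilityMeasure μ]
    (p : ℝ) (hp : 1 ≤ p) (n : ℕ) (ξ : Fin n → Ω → X)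
    (hmeas : ∀ k, Measurable (ξ k))
    (hindep : iIndepFun ξ μ)
    (hsymm : ∀ k, Measure.map (ξ k) μ = Measure.map (fun ω => -(ξ k ω)) μ)
    (hLp : ∀ k, MemLp (ξ k) (ENNReal.ofReal p) μ)
    (I J : Finset (Fin n)) (hIJ : I ⊆ J) :
    ∫ ω, ‖∑ k ∈ I, ξ k ω‖ ^ p ∂μ ≤ ∫ ω, ‖∑ k ∈ J, ξ k ω‖ ^ p ∂μ :=
  kahane_contraction_subset_general μ p hp n ξ hindep hsymm hLp I J hIJ
end
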